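/- arXiv:2110.06272 — 4 statements merged into one kernel-verified Lean document; each statement's English description precedes it below -/
import Mathlib

section
/- For every complex number s ≠ 1 and every integer n ≥ 2, the series ∑_{k=1}^∞ (-1)^k binom(1-s, k) · n^{1-s-k} converges absolutely and ∫_{n-1}^{n} x^{-s} dx = (1/(s-1)) · ∑_{k=1}^∞ (-1)^k binom(1-s, k) · n^{1-s-k}. -/
/-!
With `a = 1 - s`, the integral is `(n ^ a - (n - 1) ^ a) / a`. Writing
`(n - 1) ^ a = n ^ a (1 - 1/n) ^ a` and expanding `(1 + z) ^ a` as Mathlib's `binomialSeries`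
at `z = -1/n`, inside its disc of convergence `‖z‖ < 1`, gives
`(n - 1) ^ a = ∑_{k ≥ 0} (-1) ^ k binom(a, k) n ^ (a - k)`, absolutely convergent. The series
of the theorem is this one without its `k = 0` term `n ^ a`.
-/

open MeasureTheory

/-- The generalized binomial coefficient `binom(s, k) = (∏_{j=0}^{k-1} (s - j)) / k!`. -/
noncomputable def cbinom (s : ℂ) (k : ℕ) : ℂ :=
  (∏ j ∈ Finset.range k, (s - j)) / (Nat.factorial k : ℂ)

open Complex

theorem cbinom_eq_choose (a : ℂ) (k : ℕ) : cbinom a k = Ring.choose a k := by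
  rw [Ring.choose_eq_smul, ← Polynomial.aeval_eq_smeval, Polynomial.aeval_def,
    Polynomial.eval₂_eq_eval_map, descPochhammer_map, descPochhammer_eval_eq_prod_range,
    smul_eq_mul, cbinom, div_eq_inv_mul]

@[simp]
theorem cbinom_zero (a : ℂ) : cbinom a 0 = 1 := by simp [cbinom]

theorem binomialSeries_apply_diag (a z : ℂ) (k : ℕ) :
    binomialSeries ℂ a k (fun _ => z) = cbinom a k * z ^ k := by
  rw [binomialSeries, FormalMultilinearSeries.ofScalars_apply_eq, smul_eq_mul, cbinom_eq_choose]

theorem mem_eball_one_of_norm_lt_one {z : ℂ} (hz : ‖z‖ < 1) : z ∈ Metric.eball (0 : ℂ) 1 := by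
  rwa [mem_eball_zero_iff, ← ofReal_norm, ENNReal.ofReal_lt_one]

theorem mem_eball_binomialSeries_radius (a : ℂ) {z : ℂ} (hz : ‖z‖ < 1) :
    z ∈ Metric.eball (0 : ℂ) (binomialSeries ℂ a).radius :=
  Metric.eball_subset_eball binomialSeries_radius_ge_one (mem_eball_one_of_norm_lt_one hz)

theorem hasSum_cbinom_mul_pow (a : ℂ) {z : ℂ} (hz : ‖z‖ < 1) :
    HasSum (fun k => cbinom a k * z ^ k) ((1 + z) ^ a) := by
  simpa only [binomialSeries_apply_diag, zero_add] using
    (one_add_cpow_hasFPowerSeriesOnBall_zero (a := a)).hasSum (mem_eball_one_of_norm_lt_one hz)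

theorem summable_norm_cbinom_mul_pow (a : ℂ) {z : ℂ} (hz : ‖z‖ < 1) :
    Summable fun k => ‖cbinom a k * z ^ k‖ := by
  simpa only [binomialSeries_apply_diag] using
    (binomialSeries ℂ a).summable_norm_apply (mem_eball_binomialSeries_radius a hz)

theorem neg_one_pow_mul_cpow_sub_natCast {x : ℂ} (hx : x ≠ 0) (a : ℂ) (k : ℕ) :
    (-1) ^ k * x ^ (a - k) = x ^ a * (-x⁻¹) ^ k := by
  rw [cpow_sub _ _ hx, cpow_natCast, neg_pow x⁻¹, inv_pow]
  ring

theorem norm_neg_inv_lt_one {y : ℝ} (hy : 1 < y) : ‖-(y : ℂ)⁻¹‖ < 1 := by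
  rw [norm_neg, norm_inv, norm_real, Real.norm_of_nonneg (by linarith)]
  exact inv_lt_one_of_one_lt₀ hy

theorem hasSum_neg_one_pow_mul_cbinom_mul_cpow {y : ℝ} (hy : 1 < y) (a : ℂ) :
    HasSum (fun k : ℕ => (-1) ^ k * cbinom a k * (y : ℂ) ^ (a - k)) (((y - 1 : ℝ) : ℂ) ^ a) := by
  have hy0 : (y : ℂ) ≠ 0 := ofReal_ne_zero.2 (by linarith)
  have hsplit : ((y - 1 : ℝ) : ℂ) ^ a = (y : ℂ) ^ a * (1 + -(y : ℂ)⁻¹) ^ a := by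
    have h : 0 ≤ 1 - y⁻¹ := sub_nonneg.2 (inv_le_one_of_one_le₀ hy.le)
    rw [show y - 1 = y * (1 - y⁻¹) by field_simp, ofReal_mul,
      mul_cpow_ofReal_nonneg (by linarith) h]
    push_cast
    ring_nf
  rw [hsplit]
  refine ((hasSum_cbinom_mul_pow a (norm_neg_inv_lt_one hy)).mul_left _).congr_fun fun k => ?_
  rw [mul_right_comm, neg_one_pow_mul_cpow_sub_natCast hy0]
  ring

theorem summable_norm_neg_one_pow_mul_cbinom_mul_cpow {y : ℝ} (hy : 1 < y) (a : ℂ) :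
    Summable fun k : ℕ => ‖(-1) ^ k * cbinom a k * (y : ℂ) ^ (a - k)‖ := by
  have hy0 : (y : ℂ) ≠ 0 := ofReal_ne_zero.2 (by linarith)
  refine ((summable_norm_cbinom_mul_pow a (norm_neg_inv_lt_one hy)).mul_left ‖(y : ℂ) ^ a‖).congr
    fun k => ?_
  rw [mul_right_comm, neg_one_pow_mul_cpow_sub_natCast hy0, ← norm_mul]
  ring_nf

/-- For every complex `s ≠ 1` and integer `n ≥ 2`, the series
`∑_{k=1}^∞ (-1)^k binom(1-s, k) n^(1-s-k)` converges absolutely, and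
`∫_{n-1}^n x^(-s) dx = (1/(s-1)) ∑_{k=1}^∞ (-1)^k binom(1-s, k) n^(1-s-k)`. -/
theorem stmt_4 (s : ℂ) (hs : s ≠ 1) (n : ℕ) (hn : 2 ≤ n) :
    Summable (fun k : ℕ =>
      ‖(-1 : ℂ) ^ (k + 1) * cbinom (1 - s) (k + 1) * (n : ℂ) ^ (1 - s - ((k : ℂ) + 1))‖) ∧
    ∫ x : ℝ in ((n : ℝ) - 1)..(n : ℝ), (x : ℂ) ^ (-s)
      = (1 / (s - 1)) *
        ∑' k : ℕ, (-1 : ℂ) ^ (k + 1) * cbinom (1 - s) (k + 1) * (n : ℂ) ^ (1 - s - ((k : ℂ) + 1)) := by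
  have hn1 : (1 : ℝ) < n := by exact_mod_cast hn
  have hsum : HasSum (fun k : ℕ => (-1 : ℂ) ^ (k + 1) * cbinom (1 - s) (k + 1) *
      (n : ℂ) ^ (1 - s - ((k : ℂ) + 1))) (((n : ℂ) - 1) ^ (1 - s) - (n : ℂ) ^ (1 - s)) := by
    simpa using
      (hasSum_nat_add_iff' 1).2 (hasSum_neg_one_pow_mul_cbinom_mul_cpow hn1 (1 - s))
  have hint : ∫ x : ℝ in ((n : ℝ) - 1)..(n : ℝ), (x : ℂ) ^ (-s)
      = ((n : ℂ) ^ (1 - s) - ((n : ℂ) - 1) ^ (1 - s)) / (1 - s) := by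
    rw [integral_cpow (Or.inr ⟨fun h => hs (by linear_combination -h), ?_⟩)]
    · simp [neg_add_eq_sub]
    · intro h
      rcases Set.mem_uIcc.1 h with ⟨h1, _⟩ | ⟨_, h2⟩ <;> linarith
  refine ⟨by simpa using
    (summable_nat_add_iff 1).2 (summable_norm_neg_one_pow_mul_cbinom_mul_cpow hn1 (1 - s)), ?_⟩
  have hs1 : s - 1 ≠ 0 := sub_ne_zero.2 hs
  have hs1' : 1 - s ≠ 0 := sub_ne_zero.2 hs.symm
  rw [hsum.tsum_eq, hint]
  field_simp
  ring
end

section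
/- Let s be a complex number that is not equal to 1 and is not a nonpositive integer. Then the series ∑_{k=1}^∞ (-1)^k binom(1-s, k) · (ζ(k+s-1) - 1) converges and its sum equals 1. -/
/-!
Write `a = s - 1`; then `(-1)^k binom(1 - s, k)` is the multiset coefficient
`((a multichoose k)) = a (a + 1) ⋯ (a + k - 1) / k!`. For `Re a > 0` expand
`ζ(k + a) - 1 = ∑_{m ≥ 2} m^{-k-a}` and sum over `k` first: the binomial series
`∑_k ((a multichoose k)) x^k = (1 - x)^{-a}` at `x = 1/m` turns the inner sum into
`(m - 1)^{-a} - m^{-a}`, which telescopes to `1`. Since `ζ(k + a) - 1 = O(2^{-k})` beats the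
polynomial growth of the coefficients, the series converges locally uniformly, so its sum is
holomorphic on the connected set `a ∉ {0, -1, -2, …}` where all its terms are, and the identity
theorem extends the value `1` from `Re a > 0` to all of it.
-/

open Finset Filter Topology

theorem ascPochhammer_eval_eq_prod_range {R : Type*} [CommSemiring R] (a : R) (n : ℕ) :
    (ascPochhammer R n).eval a = ∏ j ∈ range n, (a + j) := by
  induction n with
  | zero => simp
  | succ n ih => rw [ascPochhammer_succ_eval, ih, prod_range_succ]

theorem Ring.multichoose_eq_prod_div {K : Type*} [Field K] [CharZero K] (a : K) (n : ℕ) :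
    Ring.multichoose a n = (∏ j ∈ range n, (a + j)) / n.factorial := by
  rw [← ascPochhammer_eval_eq_prod_range, ← Polynomial.ascPochhammer_smeval_eq_eval,
    ← Ring.factorial_nsmul_multichoose_eq_ascPochhammer, nsmul_eq_mul,
    mul_div_cancel_left₀ _ (by exact_mod_cast n.factorial_ne_zero)]

theorem neg_one_pow_mul_cbinom_neg (a : ℂ) (n : ℕ) :
    (-1) ^ n * cbinom (-a) n = Ring.multichoose a n := by
  rw [cbinom, Ring.multichoose_eq_prod_div, mul_div_assoc']
  congr 1
  rw [← card_range n, ← prod_const, card_range, ← prod_mul_distrib]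
  exact prod_congr rfl fun j _ => by ring

theorem norm_multichoose_le {a : ℂ} {κ : ℝ} (ha : ‖a‖ ≤ κ) (n : ℕ) :
    ‖Ring.multichoose a n‖ ≤ Ring.multichoose κ n := by
  rw [Ring.multichoose_eq_prod_div, Ring.multichoose_eq_prod_div, norm_div, Complex.norm_natCast]
  gcongr
  refine (Finset.norm_prod_le _ _).trans (prod_le_prod (fun _ _ => norm_nonneg _) fun j _ => ?_)
  exact (norm_add_le _ _).trans (by simpa using ha)

theorem hasSum_multichoose_mul_pow (a : ℂ) {x : ℂ} (hx : ‖x‖ < 1) :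
    HasSum (fun n => Ring.multichoose a n * x ^ n) ((1 - x) ^ (-a)) := by
  have := (Complex.one_div_one_sub_cpow_hasFPowerSeriesOnBall_zero a).hasSum
    (y := x) (by simpa [← ofReal_norm] using hx)
  simpa [Ring.multichoose_eq, Complex.cpow_neg, FormalMultilinearSeries.ofScalars_apply_eq,
    mul_comm] using this

theorem summable_multichoose_mul_pow (κ : ℝ) {r : ℝ} (hr0 : 0 ≤ r) (hr : r < 1) :
    Summable (fun n => Ring.multichoose κ n * r ^ n) := by
  have := (Real.one_div_one_sub_rpow_hasFPowerSeriesOnBall_zero κ).hasSum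
    (y := r) (by simpa [← ofReal_norm, abs_of_nonneg hr0] using hr)
  simpa [Ring.multichoose_eq, FormalMultilinearSeries.ofScalars_apply_eq, mul_comm]
    using this.summable

theorem summable_multichoose_succ_mul_pow (κ : ℝ) {r : ℝ} (hr0 : 0 < r) (hr : r < 1) :
    Summable (fun k => Ring.multichoose κ (k + 1) * r ^ k) := by
  refine ((summable_nat_add_iff 1).mpr (summable_multichoose_mul_pow κ hr0.le hr)).mul_left r⁻¹
    |>.congr fun k => ?_
  field_simp
  ring

theorem two_rpow_sub_natCast (c : ℝ) (k : ℕ) : (2 : ℝ) ^ (c - k) = 2 ^ c * (1 / 2) ^ k := by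
  rw [Real.rpow_sub two_pos, Real.rpow_natCast, div_eq_mul_inv, one_div, inv_pow]

theorem rpow_neg_le_two_rpow_mul {b σ x : ℝ} (hb : 2 ≤ b) (hσx : σ ≤ x) :
    b ^ (-x) ≤ 2 ^ (σ - x) * b ^ (-σ) := by
  have hb0 : 0 < b := by linarith
  calc b ^ (-x) = b ^ (σ - x) * b ^ (-σ) := by rw [← Real.rpow_add hb0]; ring_nf
    _ ≤ 2 ^ (σ - x) * b ^ (-σ) := by
      gcongr ?_ * _
      exact Real.rpow_le_rpow_of_nonpos two_pos hb (by linarith)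

theorem summable_nat_add_two_rpow_neg {σ : ℝ} (hσ : 1 < σ) :
    Summable (fun m : ℕ => ((m : ℝ) + 2) ^ (-σ)) := by
  have := (summable_nat_add_iff 2).mpr (Real.summable_nat_rpow.mpr (by linarith : -σ < -1))
  simpa using this

theorem tsum_nat_add_two_rpow_neg_le {σ x : ℝ} (hσ : 1 < σ) (hσx : σ ≤ x) :
    ∑' m : ℕ, ((m : ℝ) + 2) ^ (-x) ≤ 2 ^ (σ - x) * ∑' m : ℕ, ((m : ℝ) + 2) ^ (-σ) := by
  rw [← tsum_mul_left]
  exact (summable_nat_add_two_rpow_neg (hσ.trans_le hσx)).tsum_le_tsum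
    (fun m => rpow_neg_le_two_rpow_mul (by simp) hσx)
    ((summable_nat_add_two_rpow_neg hσ).mul_left _)

theorem norm_nat_add_two_cpow (m : ℕ) (z : ℂ) : ‖((m : ℂ) + 2) ^ z‖ = ((m : ℝ) + 2) ^ z.re := by
  rw [← Complex.norm_cpow_eq_rpow_re_of_pos (by positivity)]
  push_cast; rfl

theorem hasSum_riemannZeta_sub_one {z : ℂ} (hz : 1 < z.re) :
    HasSum (fun m : ℕ => ((m : ℂ) + 2) ^ (-z)) (riemannZeta z - 1) := by
  have hsum : Summable (fun n : ℕ => 1 / ((n : ℂ) + 1) ^ z) :=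
    (summable_nat_add_iff 1).mpr (Complex.summable_one_div_nat_cpow.mpr hz) |>.congr
      fun n => by push_cast; rfl
  rw [zeta_eq_tsum_one_div_nat_add_one_cpow hz, ← hsum.sum_add_tsum_nat_add 1]
  simpa [Complex.cpow_neg, add_assoc, one_add_one_eq_two] using
    ((summable_nat_add_iff 1).mpr hsum).hasSum

theorem norm_riemannZeta_sub_one_le {σ : ℝ} {z : ℂ} (hσ : 1 < σ) (hσz : σ ≤ z.re) :
    ‖riemannZeta z - 1‖ ≤ 2 ^ (σ - z.re) * ∑' m : ℕ, ((m : ℝ) + 2) ^ (-σ) := by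
  have hnorm : (fun m : ℕ => ‖((m : ℂ) + 2) ^ (-z)‖) = fun m : ℕ => ((m : ℝ) + 2) ^ (-z.re) := by
    ext m; rw [norm_nat_add_two_cpow, Complex.neg_re]
  rw [← (hasSum_riemannZeta_sub_one (hσ.trans_le hσz)).tsum_eq]
  refine (norm_tsum_le_tsum_norm ?_).trans ?_ <;> rw [hnorm]
  · exact summable_nat_add_two_rpow_neg (hσ.trans_le hσz)
  · exact tsum_nat_add_two_rpow_neg_le hσ hσz

/-- The term of index `k + 1` of the series, in the variable `a = s - 1`. -/
noncomputable def multichooseZetaTerm (a : ℂ) (k : ℕ) : ℂ :=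
  Ring.multichoose a (k + 1) * (riemannZeta (k + 1 + a) - 1)

theorem hasSum_multichoose_mul_nat_add_two_cpow (a : ℂ) (m : ℕ) :
    HasSum (fun k : ℕ => Ring.multichoose a (k + 1) * ((m : ℂ) + 2) ^ (-((k : ℂ) + 1 + a)))
      (((m : ℂ) + 1) ^ (-a) - ((m : ℂ) + 2) ^ (-a)) := by
  have hw : ((m : ℂ) + 2) = (((m : ℝ) + 2 : ℝ) : ℂ) := by push_cast; rfl
  have hw0 : ((m : ℂ) + 2) ≠ 0 := by rw [hw]; exact_mod_cast (by positivity : (m : ℝ) + 2 ≠ 0)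
  have hx : ‖((m : ℂ) + 2)⁻¹‖ < 1 := by
    rw [norm_inv, hw, Complex.norm_real, Real.norm_of_nonneg (by positivity)]
    exact inv_lt_one_of_one_lt₀ (by linarith [(m.cast_nonneg : (0 : ℝ) ≤ m)])
  have hbinom := (hasSum_nat_add_iff' 1).mpr (hasSum_multichoose_mul_pow a hx)
  have hsum : ((m : ℂ) + 1) ^ (-a) - ((m : ℂ) + 2) ^ (-a) = ((m : ℂ) + 2) ^ (-a) *
      ((1 - ((m : ℂ) + 2)⁻¹) ^ (-a) -
        ∑ i ∈ range 1, Ring.multichoose a i * ((m : ℂ) + 2)⁻¹ ^ i) := by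
    have hone : (1 - ((m : ℂ) + 2)⁻¹) = (((m : ℝ) + 1 : ℝ) / ((m : ℝ) + 2 : ℝ) : ℝ) := by
      push_cast; field_simp; ring
    rw [mul_sub, sum_range_one, pow_zero, mul_one, Ring.multichoose_zero_right, hone, hw,
      ← Complex.mul_cpow_ofReal_nonneg (by positivity) (by positivity)]
    push_cast; field_simp
  rw [hsum]
  refine (hbinom.mul_left _).congr_fun fun k => ?_
  rw [inv_pow, ← Complex.cpow_natCast, ← Complex.cpow_neg, mul_left_comm,
    ← Complex.cpow_add _ _ hw0]
  push_cast; ring_nf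

theorem summable_multichoose_mul_nat_add_two_cpow {a : ℂ} (ha : 0 < a.re) :
    Summable (fun p : ℕ × ℕ =>
      Ring.multichoose a (p.1 + 1) * ((p.2 : ℂ) + 2) ^ (-((p.1 : ℂ) + 1 + a))) := by
  have hσ : 1 < 1 + a.re := by linarith
  have hnorm (k m : ℕ) : ‖Ring.multichoose a (k + 1) * ((m : ℂ) + 2) ^ (-((k : ℂ) + 1 + a))‖ =
      ‖Ring.multichoose a (k + 1)‖ * ((m : ℝ) + 2) ^ (-(k + (1 + a.re))) := by
    rw [norm_mul, norm_nat_add_two_cpow]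
    congr 2
    simp only [Complex.neg_re, Complex.add_re, Complex.natCast_re, Complex.one_re]
    ring
  refine Summable.of_norm ((summable_prod_of_nonneg fun _ => norm_nonneg _).mpr ⟨fun k => ?_, ?_⟩)
  · simp_rw [hnorm]
    exact (summable_nat_add_two_rpow_neg (by linarith [(k.cast_nonneg : (0 : ℝ) ≤ k)])).mul_left _
  · refine Summable.of_nonneg_of_le (fun _ => tsum_nonneg fun _ => norm_nonneg _) (fun k => ?_)
      ((summable_multichoose_succ_mul_pow ‖a‖ one_half_pos one_half_lt_one).mul_left
        (∑' m : ℕ, ((m : ℝ) + 2) ^ (-(1 + a.re))))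
    simp_rw [hnorm, tsum_mul_left]
    calc ‖Ring.multichoose a (k + 1)‖ * ∑' m : ℕ, ((m : ℝ) + 2) ^ (-(k + (1 + a.re)))
        ≤ Ring.multichoose ‖a‖ (k + 1) *
          (2 ^ ((1 + a.re) - (k + (1 + a.re))) * ∑' m : ℕ, ((m : ℝ) + 2) ^ (-(1 + a.re))) := by
          gcongr
          · exact (norm_nonneg _).trans (norm_multichoose_le le_rfl _)
          · exact norm_multichoose_le le_rfl _
          · exact tsum_nat_add_two_rpow_neg_le hσ (by simp)
      _ = _ := by
          rw [show (1 + a.re) - (k + (1 + a.re)) = 0 - k by ring, two_rpow_sub_natCast]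
          ring

theorem eq_sub_of_hasSum_sub_succ {G : Type*} [AddCommGroup G] [TopologicalSpace G]
    [IsTopologicalAddGroup G] [T2Space G] {g : ℕ → G} {S l : G}
    (h : HasSum (fun n => g n - g (n + 1)) S) (hg : Tendsto g atTop (𝓝 l)) : S = g 0 - l :=
  tendsto_nhds_unique (h.tendsto_sum_nat.congr fun n => sum_range_sub' g n)
    (tendsto_const_nhds.sub hg)

theorem tendsto_nat_add_one_cpow_neg {a : ℂ} (ha : 0 < a.re) :
    Tendsto (fun m : ℕ => ((m : ℂ) + 1) ^ (-a)) atTop (𝓝 0) := by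
  rw [tendsto_zero_iff_norm_tendsto_zero]
  have hnorm (m : ℕ) : ‖((m : ℂ) + 1) ^ (-a)‖ = ((m + 1 : ℕ) : ℝ) ^ (-a.re) := by
    simpa using Complex.norm_natCast_cpow_of_pos m.succ_pos (-a)
  simp_rw [hnorm]
  exact (tendsto_rpow_neg_atTop ha).comp
    (tendsto_natCast_atTop_atTop.comp (tendsto_add_atTop_nat 1))

theorem hasSum_multichooseZetaTerm_of_re_pos {a : ℂ} (ha : 0 < a.re) :
    HasSum (multichooseZetaTerm a) 1 := by
  set T : ℕ × ℕ → ℂ := fun p =>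
    Ring.multichoose a (p.1 + 1) * ((p.2 : ℂ) + 2) ^ (-((p.1 : ℂ) + 1 + a))
  have hS : HasSum T (∑' p, T p) := (summable_multichoose_mul_nat_add_two_cpow ha).hasSum
  have hrow (k : ℕ) : HasSum (fun m => T (k, m)) (multichooseZetaTerm a k) := by
    have hz : 1 < ((k : ℂ) + 1 + a).re := by simp; linarith [(k.cast_nonneg : (0 : ℝ) ≤ k)]
    exact (hasSum_riemannZeta_sub_one hz).mul_left (Ring.multichoose a (k + 1))
  have hcol (m : ℕ) : HasSum (fun k => T (k, m))
      (((m : ℂ) + 1) ^ (-a) - (((m + 1 : ℕ) : ℂ) + 1) ^ (-a)) := by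
    rw [Nat.cast_succ, add_assoc, one_add_one_eq_two]
    exact hasSum_multichoose_mul_nat_add_two_cpow a m
  have hrows := hS.prod_fiberwise hrow
  have hcols := ((Equiv.prodComm ℕ ℕ).hasSum_iff.mpr hS).prod_fiberwise hcol
  rw [eq_sub_of_hasSum_sub_succ hcols (tendsto_nat_add_one_cpow_neg ha)] at hrows
  simpa using hrows

theorem isOpen_setOf_forall_ne_neg_natCast : IsOpen {a : ℂ | ∀ m : ℕ, a ≠ -m} := by
  have hclosed : IsClosed (Set.range fun m : ℕ => -(m : ℂ)) := by
    refine Metric.isClosed_of_pairwise_le_dist one_pos ?_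
    rintro _ ⟨m, rfl⟩ _ ⟨n, rfl⟩ hmn
    rw [dist_neg_neg, Complex.dist_of_im_eq (by simp)]
    simpa using Nat.pairwise_one_le_dist fun h => hmn (by rw [h])
  convert hclosed.isOpen_compl using 1
  ext a; simp [eq_comm]

theorem isPreconnected_setOf_forall_ne_neg_natCast :
    IsPreconnected {a : ℂ | ∀ m : ℕ, a ≠ -m} := by
  convert ((Set.countable_range fun m : ℕ => -(m : ℂ)).isConnected_compl_of_one_lt_rank
    (by simp)).isPreconnected using 1
  ext a; simp [eq_comm]

theorem differentiableAt_multichooseZetaTerm {a : ℂ} {k : ℕ} (ha : a ≠ -k) :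
    DifferentiableAt ℂ (multichooseZetaTerm · k) a := by
  have hz : (k : ℂ) + 1 + a ≠ 1 := fun h => ha (by linear_combination h)
  unfold multichooseZetaTerm
  simp_rw [Ring.multichoose_eq_prod_div]
  refine DifferentiableAt.mul (by fun_prop) ?_
  exact ((differentiableAt_riemannZeta hz).comp a (by fun_prop)).sub_const 1

theorem norm_multichooseZetaTerm_le {a₀ a : ℂ} (ha : dist a a₀ < 1) {k : ℕ} (hk : 2 - a₀.re ≤ k) :
    ‖multichooseZetaTerm a k‖ ≤ 2 ^ (2 - a₀.re) * (∑' m : ℕ, ((m : ℝ) + 2) ^ (-2 : ℝ)) *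
      (Ring.multichoose (‖a₀‖ + 1) (k + 1) * (1 / 2) ^ k) := by
  rw [dist_eq_norm] at ha
  have hre : a₀.re - 1 < a.re := by
    have := (Complex.abs_re_le_norm (a - a₀)).trans_lt ha
    rw [Complex.sub_re, abs_lt] at this
    linarith
  have hκ : ‖a‖ ≤ ‖a₀‖ + 1 := by linarith [norm_le_norm_add_norm_sub' a a₀]
  have hc := norm_multichoose_le hκ (k + 1)
  have hz : (k : ℝ) + a₀.re ≤ ((k : ℂ) + 1 + a).re := by simp; linarith
  have hζ := norm_riemannZeta_sub_one_le one_lt_two (by linarith : (2 : ℝ) ≤ ((k : ℂ) + 1 + a).re)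
  have h2 : (2 : ℝ) ^ (2 - ((k : ℂ) + 1 + a).re) ≤ 2 ^ ((2 - a₀.re) - k) :=
    Real.rpow_le_rpow_of_exponent_le one_le_two (by linarith)
  rw [two_rpow_sub_natCast] at h2
  rw [multichooseZetaTerm, norm_mul]
  calc _ ≤ Ring.multichoose (‖a₀‖ + 1) (k + 1) *
        (2 ^ (2 - ((k : ℂ) + 1 + a).re) * ∑' m : ℕ, ((m : ℝ) + 2) ^ (-2 : ℝ)) := by
        gcongr
        exact (norm_nonneg _).trans hc
    _ ≤ Ring.multichoose (‖a₀‖ + 1) (k + 1) *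
        (2 ^ (2 - a₀.re) * (1 / 2) ^ k * ∑' m : ℕ, ((m : ℝ) + 2) ^ (-2 : ℝ)) := by
        gcongr
        exact (norm_nonneg _).trans hc
    _ = _ := by ring

theorem exists_summable_bound_multichooseZetaTerm (a₀ : ℂ) :
    ∃ u : ℕ → ℝ, Summable u ∧
      ∀ᶠ k in cofinite, ∀ a ∈ Metric.ball a₀ 1, ‖multichooseZetaTerm a k‖ ≤ u k := by
  refine ⟨_, (summable_multichoose_succ_mul_pow (‖a₀‖ + 1) one_half_pos one_half_lt_one).mul_left
    (2 ^ (2 - a₀.re) * ∑' m : ℕ, ((m : ℝ) + 2) ^ (-2 : ℝ)), ?_⟩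
  rw [Nat.cofinite_eq_atTop]
  filter_upwards [tendsto_natCast_atTop_atTop.eventually_ge_atTop (2 - a₀.re)] with k hk a ha
  exact norm_multichooseZetaTerm_le ha hk

theorem summable_multichooseZetaTerm (a : ℂ) : Summable (multichooseZetaTerm a) := by
  obtain ⟨u, hu, hbound⟩ := exists_summable_bound_multichooseZetaTerm a
  exact hu.of_norm_bounded_eventually (hbound.mono fun k hk => hk a (Metric.mem_ball_self one_pos))

theorem differentiableOn_tsum_multichooseZetaTerm :
    DifferentiableOn ℂ (fun a => ∑' k, multichooseZetaTerm a k) {a : ℂ | ∀ m : ℕ, a ≠ -m} := by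
  refine TendstoLocallyUniformlyOn.differentiableOn (φ := atTop)
    (F := fun (t : Finset ℕ) a => ∑ k ∈ t, multichooseZetaTerm a k) ?_ ?_
    isOpen_setOf_forall_ne_neg_natCast
  · refine (tendstoLocallyUniformly_of_forall_exists_nhds fun a₀ => ?_).tendstoLocallyUniformlyOn
    obtain ⟨u, hu, hbound⟩ := exists_summable_bound_multichooseZetaTerm a₀
    exact ⟨_, Metric.ball_mem_nhds a₀ one_pos,
      tendstoUniformlyOn_tsum_of_cofinite_eventually hu hbound⟩
  · exact Eventually.of_forall fun t => DifferentiableOn.fun_sum fun k _ a ha =>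
      (differentiableAt_multichooseZetaTerm (ha k)).differentiableWithinAt

theorem hasSum_multichooseZetaTerm {a : ℂ} (ha : ∀ m : ℕ, a ≠ -m) :
    HasSum (multichooseZetaTerm a) 1 := by
  have hF := differentiableOn_tsum_multichooseZetaTerm.analyticOnNhd
    isOpen_setOf_forall_ne_neg_natCast
  have h1 : (1 : ℂ) ∈ {a : ℂ | ∀ m : ℕ, a ≠ -m} := fun m h => by
    have := congrArg Complex.re h
    simp at this
    linarith [(m.cast_nonneg : (0 : ℝ) ≤ m)]
  have hnear : (fun a => ∑' k, multichooseZetaTerm a k) =ᶠ[𝓝 1] fun _ => 1 := by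
    filter_upwards [(isOpen_lt continuous_const Complex.continuous_re).mem_nhds
      (by simp : (0 : ℝ) < (1 : ℂ).re)] with a ha
    exact (hasSum_multichooseZetaTerm_of_re_pos ha).tsum_eq
  have := hF.eqOn_of_preconnected_of_eventuallyEq analyticOnNhd_const
    isPreconnected_setOf_forall_ne_neg_natCast h1 hnear ha
  simpa [this] using (summable_multichooseZetaTerm a).hasSum

/-- Let `s` be a complex number not equal to `1` and not a nonpositive integer. Then the
series `∑_{k=1}^∞ (-1)^k binom(1-s, k) (ζ(k+s-1) - 1)` converges and its sum equals `1`. -/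
theorem stmt_8 (s : ℂ) (hs1 : s ≠ 1) (hs2 : ∀ m : ℕ, s ≠ -(m : ℂ)) :
    Summable (fun k : ℕ =>
      (-1 : ℂ) ^ (k + 1) * cbinom (1 - s) (k + 1) * (riemannZeta (((k : ℂ) + 1) + s - 1) - 1)) ∧
    ∑' k : ℕ, (-1 : ℂ) ^ (k + 1) * cbinom (1 - s) (k + 1) *
      (riemannZeta (((k : ℂ) + 1) + s - 1) - 1) = 1 := by
  have ha : ∀ m : ℕ, s - 1 ≠ -m := by
    rintro (_ | m) h
    · exact hs1 (by simpa [sub_eq_zero] using h)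
    · exact hs2 m (by push_cast at h; linear_combination h)
  have hterm (k : ℕ) : (-1 : ℂ) ^ (k + 1) * cbinom (1 - s) (k + 1) *
      (riemannZeta (((k : ℂ) + 1) + s - 1) - 1) = multichooseZetaTerm (s - 1) k := by
    rw [multichooseZetaTerm, ← neg_one_pow_mul_cbinom_neg, neg_sub, add_sub_assoc]
  simp_rw [hterm]
  exact ⟨summable_multichooseZetaTerm _, (hasSum_multichooseZetaTerm ha).tsum_eq⟩
end

section
/- For every natural number n ≥ 0 (corresponding to the nonpositive integer s = -n), the finite sum ∑_{k=1}^{n+1} (-1)^k binom(n+1, k) · (ζ(k-n-1) - 1) equals (-1)^n/(n+2) + 1. -/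
/-!
Write `ζ(-j) = (-1)^j B_{j+1}/(j+1)` and substitute `j = n + 1 - k`. The zeta part becomes
`(-1)^(n+1) ∑_{j ≤ n} binom(n+1, j) B_{j+1}/(j+1)`, and since
`binom(n+1, j)/(j+1) = binom(n+2, j+1)/(n+2)` this is `(-1)^(n+1)/(n+2)` times
`∑_{1 ≤ i ≤ n+1} binom(n+2, i) B_i = -B_0 = -1`. The `-1` part is an alternating sum of binomial
coefficients with its `k = 0` term missing, hence contributes `+1`.
-/

open Finset

theorem sum_Icc_one_neg_one_pow_mul_choose {R : Type*} [CommRing R] {m : ℕ} (hm : m ≠ 0) :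
    ∑ k ∈ Icc 1 m, (-1 : R) ^ k * m.choose k = -1 := by
  have hsum : ∑ k ∈ range (m + 1), (-1 : R) ^ k * m.choose k = 0 := by
    exact_mod_cast congrArg (Int.cast : ℤ → R) (Int.alternating_sum_range_choose_of_ne hm)
  rw [Nat.range_succ_eq_Icc_zero, ← add_sum_Ioc_eq_sum_Icc (Nat.zero_le m),
    ← zero_add 1, ← Icc_add_one_left_eq_Ioc] at hsum
  simpa [add_eq_zero_iff_eq_neg'] using hsum

theorem sum_range_choose_mul_bernoulli_succ_div (n : ℕ) :
    ∑ j ∈ range (n + 1), ((n + 1).choose j : ℚ) * bernoulli (j + 1) / (j + 1) = -1 / (n + 2) := by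
  have hchoose (j : ℕ) :
      ((n + 1).choose j : ℚ) / (j + 1) = ((n + 2).choose (j + 1) : ℚ) / (n + 2) := by
    have h : ((n + 2 : ℕ) : ℚ) * (n + 1).choose j = (n + 2).choose (j + 1) * (j + 1 : ℕ) := by
      exact_mod_cast Nat.add_one_mul_choose_eq (n + 1) j
    rw [div_eq_div_iff (by positivity) (by positivity)]
    push_cast at h
    linear_combination h
  have hbernoulli := sum_bernoulli (n + 2)
  rw [sum_range_succ', if_neg (by omega)] at hbernoulli
  simp only [Nat.choose_zero_right, Nat.cast_one, bernoulli_zero, mul_one] at hbernoulli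
  calc ∑ j ∈ range (n + 1), ((n + 1).choose j : ℚ) * bernoulli (j + 1) / (j + 1)
      = (∑ j ∈ range (n + 1), ((n + 2).choose (j + 1) : ℚ) * bernoulli (j + 1)) / (n + 2) := by
        rw [sum_div]
        refine sum_congr rfl fun j _ => ?_
        rw [mul_div_right_comm, hchoose, div_mul_eq_mul_div]
    _ = -1 / (n + 2) := by rw [eq_neg_of_add_eq_zero_left hbernoulli]

theorem sum_Icc_neg_one_pow_mul_choose_mul_riemannZeta (n : ℕ) :
    ∑ k ∈ Icc 1 (n + 1),
        (-1 : ℂ) ^ k * (n + 1).choose k * riemannZeta ((k : ℂ) - n - 1)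
      = (-1) ^ n / ((n : ℂ) + 2) := by
  have hterm (j : ℕ) (hj : j ≤ n) :
      (-1 : ℂ) ^ (n + 1 - j) * (n + 1).choose (n + 1 - j)
          * riemannZeta (((n + 1 - j : ℕ) : ℂ) - n - 1)
        = (-1) ^ (n + 1) * (((n + 1).choose j : ℚ) * bernoulli (j + 1) / (j + 1) : ℚ) := by
    have hpow : (-1 : ℂ) ^ (n + 1 - j) * (-1) ^ j = (-1) ^ (n + 1) := by
      rw [← pow_add, Nat.sub_add_cancel (by omega)]
    rw [Nat.choose_symm (by omega), Nat.cast_sub (by omega),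
      show ((n + 1 : ℕ) : ℂ) - j - n - 1 = -(j : ℂ) by push_cast; ring,
      riemannZeta_neg_nat_eq_bernoulli, ← hpow]
    push_cast
    ring
  calc ∑ k ∈ Icc 1 (n + 1), (-1 : ℂ) ^ k * (n + 1).choose k * riemannZeta ((k : ℂ) - n - 1)
      = ∑ j ∈ range (n + 1),
          (-1 : ℂ) ^ (n + 1) * (((n + 1).choose j : ℚ) * bernoulli (j + 1) / (j + 1) : ℚ) := by
        refine sum_nbij' (fun k => n + 1 - k) (fun j => n + 1 - j) ?_ ?_ ?_ ?_ ?_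
        all_goals intro a ha; simp only [mem_Icc, mem_range] at ha
        · simp only [mem_range]; omega
        · simp only [mem_Icc]; omega
        · omega
        · omega
        · rw [← hterm (n + 1 - a) (by omega), Nat.sub_sub_self (by omega)]
    _ = (-1) ^ n / ((n : ℂ) + 2) := by
        rw [← mul_sum, ← Rat.cast_sum, sum_range_choose_mul_bernoulli_succ_div]
        push_cast
        ring

/-- For every natural `n ≥ 0` (corresponding to the nonpositive integer `s = -n`),
`∑_{k=1}^{n+1} (-1)^k binom(n+1, k) (ζ(k-n-1) - 1) = (-1)^n/(n+2) + 1`. -/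
theorem stmt_10 (n : ℕ) :
    ∑ k ∈ Finset.Icc 1 (n + 1),
        (-1 : ℂ) ^ k * (Nat.choose (n + 1) k : ℂ) * (riemannZeta ((k : ℂ) - n - 1) - 1)
      = (-1 : ℂ) ^ n / ((n : ℂ) + 2) + 1 := by
  simp only [mul_sub, mul_one, sum_sub_distrib]
  rw [sum_Icc_neg_one_pow_mul_choose_mul_riemannZeta,
    sum_Icc_one_neg_one_pow_mul_choose n.succ_ne_zero, sub_neg_eq_add]
end

section
/- For every complex number s with Re(s) < 0, the integral ∫₀^∞ t^{-s}/(e^{2πt} - 1) dt converges and ζ(s) = 2 sin(πs/2) · ∫₀^∞ t^{-s}/(e^{2πt} - 1) dt. -/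
/-!
Expanding `1 / (e^t - 1) = ∑_{n ≥ 1} e^{-n t}` and integrating termwise against `t^(s-1)` gives
`∫₀^∞ t^(s-1) / (e^(c t) - 1) dt = c^(-s) Γ(s) ζ(s)` for `Re s > 1` and `c > 0`.
For `Re s < 0` this applies at `1 - s` with `c = 2π`, and the functional equation
`ζ(s) = 2 sin(π s / 2) (2π)^(s-1) Γ(1-s) ζ(1-s)` turns the result into the claimed identity.
-/

open MeasureTheory Real
open Complex Set Filter Asymptotics Topology

lemma one_div_exp_sub_one_eq (z : ℂ) :
    1 / (Complex.exp z - 1) = Complex.exp (-z) * (1 - Complex.exp (-z))⁻¹ := by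
  rw [Complex.exp_neg, ← mul_inv, mul_sub, mul_one, mul_inv_cancel₀ (Complex.exp_ne_zero z),
    one_div]

lemma norm_exp_neg_ofReal (t : ℝ) : ‖Complex.exp (-t)‖ = Real.exp (-t) := by
  rw [← ofReal_neg, norm_exp_ofReal]

lemma le_norm_exp_ofReal_sub_one (t : ℝ) : t ≤ ‖Complex.exp t - 1‖ := by
  rw [← ofReal_exp, ← ofReal_one, ← ofReal_sub, norm_real, Real.norm_eq_abs]
  exact le_abs.mpr (Or.inl (by linarith [Real.add_one_le_exp t]))

-- The factor `1` matches the shape `a n * exp (-p n * t)` of `hasSum_mellin`.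
lemma hasSum_exp_neg_nat_add_one_mul {t : ℝ} (ht : 0 < t) :
    HasSum (fun n : ℕ => (1 : ℂ) * Real.exp (-(n + 1 : ℝ) * t)) (1 / (Complex.exp t - 1)) := by
  have hr : ‖Complex.exp (-t)‖ < 1 := by
    rw [norm_exp_neg_ofReal, Real.exp_lt_one_iff]
    linarith
  rw [one_div_exp_sub_one_eq]
  refine ((hasSum_geometric_of_norm_lt_one hr).mul_left _).congr_fun fun n => ?_
  push_cast
  rw [one_mul, ← Complex.exp_nat_mul, ← Complex.exp_add]
  ring_nf

lemma continuousOn_one_div_exp_sub_one :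
    ContinuousOn (fun t : ℝ => 1 / (Complex.exp t - 1)) (Ioi 0) :=
  continuousOn_const.div (by fun_prop) fun t ht =>
    norm_pos_iff.mp ((mem_Ioi.mp ht).trans_le (le_norm_exp_ofReal_sub_one t))

lemma one_div_exp_sub_one_isBigO_atTop :
    (fun t : ℝ => 1 / (Complex.exp t - 1)) =O[atTop] fun t => Real.exp (-1 * t) := by
  simp_rw [one_div_exp_sub_one_eq, neg_one_mul]
  have hdecay : Tendsto (fun t : ℝ => Complex.exp (-t)) atTop (𝓝 0) := by
    rw [tendsto_zero_iff_norm_tendsto_zero]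
    simpa only [norm_exp_neg_ofReal] using Real.tendsto_exp_neg_atTop_nhds_zero
  have hbdd : (fun t : ℝ => (1 - Complex.exp (-t))⁻¹) =O[atTop] fun _ => (1 : ℝ) := by
    refine Tendsto.isBigO_one ℝ (c := 1) ?_
    simpa using (tendsto_const_nhds.sub hdecay).inv₀ (by norm_num : (1 : ℂ) - 0 ≠ 0)
  simpa using (isBigO_of_le atTop fun t => (norm_exp_neg_ofReal t).trans_le
    (Real.le_norm_self _)).mul hbdd

lemma one_div_exp_sub_one_isBigO_nhdsGT_zero :
    (fun t : ℝ => 1 / (Complex.exp t - 1)) =O[𝓝[>] 0] (· ^ (-1 : ℝ)) := by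
  refine isBigO_iff.mpr ⟨1, ?_⟩
  filter_upwards [self_mem_nhdsWithin] with t (ht : 0 < t)
  rw [one_mul, norm_div, norm_one, Real.rpow_neg_one, norm_inv, Real.norm_of_nonneg ht.le,
    one_div]
  exact inv_anti₀ ht (le_norm_exp_ofReal_sub_one t)

lemma mellinConvergent_one_div_exp_sub_one {s : ℂ} (hs : 1 < s.re) :
    MellinConvergent (fun t : ℝ => 1 / (Complex.exp t - 1)) s :=
  mellinConvergent_of_isBigO_rpow_exp one_pos
    (continuousOn_one_div_exp_sub_one.locallyIntegrableOn measurableSet_Ioi)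
    one_div_exp_sub_one_isBigO_atTop one_div_exp_sub_one_isBigO_nhdsGT_zero hs

lemma mellin_one_div_exp_sub_one {s : ℂ} (hs : 1 < s.re) :
    mellin (fun t : ℝ => 1 / (Complex.exp t - 1)) s = Gamma s * riemannZeta s := by
  have hsummable : Summable fun n : ℕ => ‖(1 : ℂ)‖ / ((n : ℝ) + 1) ^ s.re := by
    simpa [abs_of_pos (Nat.cast_add_one_pos (α := ℝ) _)] using
      (Real.summable_one_div_nat_add_rpow 1 s.re).mpr hs
  have hsum := hasSum_mellin (a := fun _ : ℕ => (1 : ℂ)) (p := fun n => n + 1)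
    (fun n => Or.inr (Nat.cast_add_one_pos n)) (by linarith)
    (fun t ht => hasSum_exp_neg_nat_add_one_mul ht) hsummable
  rw [← hsum.tsum_eq, zeta_eq_tsum_one_div_nat_add_one_cpow hs, ← tsum_mul_left]
  congr 1 with n
  push_cast
  ring

lemma cpow_div_exp_mul_sub_one_eq (c : ℝ) (s : ℂ) :
    (fun t : ℝ => (t : ℂ) ^ (s - 1) / (Complex.exp (c * t) - 1)) =
      fun t : ℝ => (t : ℂ) ^ (s - 1) • (fun u : ℝ => 1 / (Complex.exp u - 1)) (c * t) := by
  ext t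
  simp [div_eq_mul_inv]

lemma integrableOn_cpow_div_exp_mul_sub_one {c : ℝ} (hc : 0 < c) {s : ℂ} (hs : 1 < s.re) :
    IntegrableOn (fun t : ℝ => (t : ℂ) ^ (s - 1) / (Complex.exp (c * t) - 1)) (Ioi 0) := by
  rw [cpow_div_exp_mul_sub_one_eq]
  exact (MellinConvergent.comp_mul_left hc).mpr (mellinConvergent_one_div_exp_sub_one hs)

lemma integral_cpow_div_exp_mul_sub_one {c : ℝ} (hc : 0 < c) {s : ℂ} (hs : 1 < s.re) :
    ∫ t : ℝ in Ioi 0, (t : ℂ) ^ (s - 1) / (Complex.exp (c * t) - 1) =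
      (c : ℂ) ^ (-s) * Gamma s * riemannZeta s := by
  rw [cpow_div_exp_mul_sub_one_eq, ← mellin,
    mellin_comp_mul_left (fun u : ℝ => 1 / (Complex.exp u - 1)) s hc,
    mellin_one_div_exp_sub_one hs, smul_eq_mul, mul_assoc]

lemma riemannZeta_eq_two_mul_sin_mul {s : ℂ} (hs : ∀ n : ℕ, s ≠ n) :
    riemannZeta s =
      2 * sin (π * s / 2) * ((2 * π) ^ (s - 1) * Gamma (1 - s) * riemannZeta (1 - s)) := by
  have hfeq := riemannZeta_one_sub (s := 1 - s)
    (fun n h => hs (n + 1) (by push_cast; linear_combination -h))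
    (fun h => hs 0 (by push_cast; linear_combination -h))
  rw [sub_sub_cancel, neg_sub, show π * (1 - s) / 2 = π / 2 - π * s / 2 by ring,
    Complex.cos_pi_div_two_sub] at hfeq
  rw [hfeq]
  ring

/-- For every complex `s` with `Re(s) < 0`, the integral `∫₀^∞ t^(-s)/(e^(2πt) - 1) dt`
converges and `ζ(s) = 2 sin(π s / 2) ∫₀^∞ t^(-s)/(e^(2πt) - 1) dt`. -/
theorem stmt_14 (s : ℂ) (hs : s.re < 0) :
    IntegrableOn (fun t : ℝ => (t : ℂ) ^ (-s) / (Complex.exp (2 * Real.pi * t) - 1))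
      (Set.Ioi 0) ∧
    riemannZeta s = 2 * Complex.sin (Real.pi * s / 2) *
      ∫ t : ℝ in Set.Ioi 0, (t : ℂ) ^ (-s) / (Complex.exp (2 * Real.pi * t) - 1) := by
  have hs' : 1 < (1 - s).re := by
    rw [sub_re, one_re]
    linarith
  have hint := integrableOn_cpow_div_exp_mul_sub_one Real.two_pi_pos hs'
  have hval := integral_cpow_div_exp_mul_sub_one Real.two_pi_pos hs'
  simp only [sub_sub_cancel_left, ofReal_mul, ofReal_ofNat] at hint hval
  refine ⟨hint, ?_⟩
  rw [hval, riemannZeta_eq_two_mul_sin_mul fun n h =>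
    (Nat.cast_nonneg (α := ℝ) n).not_gt (by simpa [h] using hs), neg_sub]
end
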